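/- arXiv:2007.06193 — 2 statements merged into one kernel-verified Lean document; each statement's English description precedes it below -/
import Mathlib

section
/- Let m > 0, γ ∈ ℝ, and θ ∈ (γ, π + γ). Then the function ψ(z) = e^{-z m sin(θ-γ)} (1, e^{iγ}) on (0,∞) is square-integrable, satisfies the boundary condition ψ(0) ∝ (1, e^{iγ}), and satisfies the Dirac eigenvalue equation [[-i d/dz, m e^{-iθ}],[m e^{iθ}, i d/dz]] ψ = m cos(θ-γ) ψ pointwise. -/
open MeasureTheory Complex

/-! The spinor is `e^{-κz} (1, e^{iγ})` with decay rate `κ = m sin(θ - γ)`, positive exactly because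
`θ - γ ∈ (0, π)`; this gives square-integrability. Differentiation multiplies by `-κ`, so the
Dirac equation reduces to the two phase identities `e^{-iθ} e^{iγ} = cos(θ-γ) - i sin(θ-γ)` and
`e^{iθ} = e^{iγ} (cos(θ-γ) + i sin(θ-γ))`, the sine parts cancelling against `∓ iκ`. -/

theorem memLp_two_exp_neg_mul_smul_Ioi {E : Type*} [NormedAddCommGroup E] [NormedSpace ℝ E]
    {a : ℝ} (ha : 0 < a) (v : E) :
    MemLp (fun z : ℝ => Real.exp (-(z * a)) • v) 2 (volume.restrict (Set.Ioi 0)) := by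
  have hmeas : AEStronglyMeasurable (fun z : ℝ => Real.exp (-(z * a)) • v)
      (volume.restrict (Set.Ioi 0)) := by fun_prop
  rw [memLp_two_iff_integrable_sq_norm hmeas]
  have hsq : ∀ z : ℝ, ‖Real.exp (-(z * a)) • v‖ ^ 2 = Real.exp (-(2 * a) * z) * ‖v‖ ^ 2 := by
    intro z
    rw [norm_smul, Real.norm_of_nonneg (Real.exp_pos _).le, mul_pow, ← Real.exp_nat_mul]
    ring_nf
  simp_rw [hsq]
  exact (exp_neg_integrableOn_Ioi 0 (by positivity)).mul_const _

theorem hasDerivAt_cexp_ofReal_neg_mul (a z : ℝ) :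
    HasDerivAt (fun z : ℝ => cexp ((-(z * a) : ℝ) : ℂ)) (-a * cexp ((-(z * a) : ℝ) : ℂ)) z := by
  have h : HasDerivAt (fun z : ℝ => -(z * a)) (-a) z := by
    simpa using hasDerivAt_mul_const (x := z) (-a)
  simpa [mul_comm] using h.ofReal_comp.cexp

theorem exp_neg_I_mul_mul_exp_I_mul (θ γ : ℝ) :
    cexp (-I * θ) * cexp (I * γ) = Real.cos (θ - γ) - Real.sin (θ - γ) * I := by
  have h : (Real.cos (θ - γ) : ℂ) - Real.sin (θ - γ) * I
      = cos (-(θ - γ) : ℂ) + sin (-(θ - γ) : ℂ) * I := by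
    rw [cos_neg, sin_neg, ofReal_cos, ofReal_sin]; push_cast; ring
  rw [h, ← exp_mul_I, ← Complex.exp_add]
  ring_nf

theorem exp_I_mul_eq_exp_I_mul_mul (θ γ : ℝ) :
    cexp (I * θ) = cexp (I * γ) * (Real.cos (θ - γ) + Real.sin (θ - γ) * I) := by
  rw [ofReal_cos, ofReal_sin, ← exp_mul_I, ← Complex.exp_add]
  push_cast; ring_nf

/-- For `m > 0` and `θ ∈ (γ, π+γ)`, the function
`ψ(z) = e^{-z m sin(θ-γ)}(1, e^{iγ})` is square-integrable on `(0,∞)`,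
satisfies the boundary condition `ψ(0) ∝ (1, e^{iγ})`, and satisfies the Dirac
eigenvalue equation with eigenvalue `m cos(θ-γ)` pointwise. -/
theorem edge_state_eigenfunction (m γ θ : ℝ) (hm : 0 < m)
    (hθ : θ ∈ Set.Ioo γ (Real.pi + γ))
    (ψ₁ ψ₂ : ℝ → ℂ)
    (hψ₁ : ∀ z : ℝ, ψ₁ z = Complex.exp ((-(z * m * Real.sin (θ - γ)) : ℝ) : ℂ))
    (hψ₂ : ∀ z : ℝ, ψ₂ z =
      Complex.exp (Complex.I * γ) * Complex.exp ((-(z * m * Real.sin (θ - γ)) : ℝ) : ℂ)) :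
    MemLp (fun z : ℝ => (ψ₁ z, ψ₂ z)) 2 (volume.restrict (Set.Ioi (0 : ℝ))) ∧
    (∃ c : ℂ, ψ₁ 0 = c * 1 ∧ ψ₂ 0 = c * Complex.exp (Complex.I * γ)) ∧
    (∀ z : ℝ, 0 < z →
      (-Complex.I * deriv ψ₁ z + (m : ℂ) * Complex.exp (-Complex.I * θ) * ψ₂ z
          = (m : ℂ) * (Real.cos (θ - γ) : ℝ) * ψ₁ z) ∧
      ((m : ℂ) * Complex.exp (Complex.I * θ) * ψ₁ z + Complex.I * deriv ψ₂ z
          = (m : ℂ) * (Real.cos (θ - γ) : ℝ) * ψ₂ z)) := by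
  set κ := m * Real.sin (θ - γ) with hκ
  have hκ_pos : 0 < κ :=
    mul_pos hm (Real.sin_pos_of_pos_of_lt_pi (by linarith [hθ.1]) (by linarith [hθ.2]))
  have hκ' : (κ : ℂ) = m * Real.sin (θ - γ) := by push_cast [hκ]; rfl
  obtain rfl : ψ₁ = fun z => cexp ((-(z * κ) : ℝ) : ℂ) := funext fun z => by rw [hψ₁, mul_assoc]
  obtain rfl : ψ₂ = fun z => cexp (I * γ) * cexp ((-(z * κ) : ℝ) : ℂ) :=
    funext fun z => by rw [hψ₂, mul_assoc]
  have hd₁ (z : ℝ) : deriv (fun z : ℝ => cexp ((-(z * κ) : ℝ) : ℂ)) z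
      = -κ * cexp ((-(z * κ) : ℝ) : ℂ) :=
    (hasDerivAt_cexp_ofReal_neg_mul κ z).deriv
  have hd₂ (z : ℝ) : deriv (fun z : ℝ => cexp (I * γ) * cexp ((-(z * κ) : ℝ) : ℂ)) z
      = cexp (I * γ) * (-κ * cexp ((-(z * κ) : ℝ) : ℂ)) :=
    ((hasDerivAt_cexp_ofReal_neg_mul κ z).const_mul _).deriv
  refine ⟨?_, ⟨1, by simp⟩, fun z _ => ⟨?_, ?_⟩⟩
  · have hspinor : (fun z : ℝ => (cexp ((-(z * κ) : ℝ) : ℂ),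
        cexp (I * γ) * cexp ((-(z * κ) : ℝ) : ℂ))) =
        fun z : ℝ => Real.exp (-(z * κ)) • ((1 : ℂ), cexp (I * γ)) := by
      funext z
      ext <;> simp [ofReal_exp, mul_comm]
    rw [hspinor]
    exact memLp_two_exp_neg_mul_smul_Ioi hκ_pos _
  · rw [hd₁]
    linear_combination cexp ((-(z * κ) : ℝ) : ℂ) * (m * exp_neg_I_mul_mul_exp_I_mul θ γ + I * hκ')
  · rw [hd₂, exp_I_mul_eq_exp_I_mul_mul θ γ]
    linear_combination -I * cexp (I * γ) * cexp ((-(z * κ) : ℝ) : ℂ) * hκ'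
end

section
/- Let m > 0, γ ∈ ℝ, θ ∈ (π+γ, 2π+γ), and λ ∈ (-m, m). Then there is no nonzero function ψ ∈ L²((0,∞); ℂ²) of the form ψ(z) = e^{μz} v with v ∈ ℂ², μ ∈ ℂ, Re μ < 0, satisfying both the eigenvalue equation [[-i d/dz, m e^{-iθ}],[m e^{iθ}, i d/dz]] ψ = λ ψ and the boundary condition ψ(0) ∝ (1, e^{iγ}). -/
/-!
Substituting `ψ(z) = e^{μz} c (1, e^{iγ})` into the second component of the eigenvalue equation
forces `μ = i (m e^{i(θ-γ)} - λ)` unless `c = 0`. Then `Re μ = -m sin (θ - γ) > 0` for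
`θ - γ ∈ (π, 2π)`, contradicting decay.
-/

open Complex

lemma hasDerivAt_cexp_mul_ofReal_mul_const (μ w : ℂ) (z : ℝ) :
    HasDerivAt (fun t : ℝ => cexp (μ * t) * w) (μ * cexp (μ * z) * w) z := by
  have h := ((hasDerivAt_id (z : ℂ)).const_mul μ).cexp.comp_ofReal
  simp only [id, mul_one] at h
  simpa only [mul_comm (cexp _) μ] using h.mul_const w

lemma re_eq_neg_mul_sin_of_dispersion {m γ θ lam : ℝ} {μ : ℂ}
    (h : (m : ℂ) * cexp (I * θ) + I * μ * cexp (I * γ) = lam * cexp (I * γ)) :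
    μ.re = -(m * Real.sin (θ - γ)) := by
  have hμ : μ = I * (m * cexp (((θ - γ : ℝ) : ℂ) * I) - lam) := by
    have hsplit : cexp (I * θ) = cexp (((θ - γ : ℝ) : ℂ) * I) * cexp (I * γ) := by
      rw [← Complex.exp_add]; push_cast; ring_nf
    rw [hsplit] at h
    apply mul_right_cancel₀ (Complex.exp_ne_zero (I * γ))
    linear_combination -I * h + μ * cexp (I * γ) * I_sq
  rw [hμ, I_mul_re, sub_im, im_ofReal_mul, exp_ofReal_mul_I_im, ofReal_im, sub_zero]

lemma Real.sin_neg_of_pi_lt_of_lt_two_pi {x : ℝ} (h₁ : Real.pi < x) (h₂ : x < 2 * Real.pi) :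
    Real.sin x < 0 := by
  rw [← Real.sin_sub_two_pi]
  exact Real.sin_neg_of_neg_of_neg_pi_lt (by linarith) (by linarith)

theorem no_edge_state_general (m γ θ lam : ℝ) (hm : 0 < m)
    (hθ : θ ∈ Set.Ioo (Real.pi + γ) (2 * Real.pi + γ))
    (v : Fin 2 → ℂ) (μ : ℂ) (hμ : μ.re < 0)
    (heig : ∀ z : ℝ, 0 < z →
      (-Complex.I * deriv (fun t : ℝ => Complex.exp (μ * t) * v 0) z
          + (m : ℂ) * Complex.exp (-Complex.I * θ) * (Complex.exp (μ * z) * v 1)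
        = (lam : ℂ) * (Complex.exp (μ * z) * v 0)) ∧
      ((m : ℂ) * Complex.exp (Complex.I * θ) * (Complex.exp (μ * z) * v 0)
          + Complex.I * deriv (fun t : ℝ => Complex.exp (μ * t) * v 1) z
        = (lam : ℂ) * (Complex.exp (μ * z) * v 1)))
    (hbc : ∃ c : ℂ, v 0 = c * 1 ∧ v 1 = c * Complex.exp (Complex.I * γ)) :
    v = 0 := by
  obtain ⟨c, hc0, hc1⟩ := hbc
  suffices c = 0 by
    ext i
    fin_cases i <;> simp [hc0, hc1, this]
  by_contra hc
  have hlower := (heig 1 one_pos).2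
  rw [(hasDerivAt_cexp_mul_ofReal_mul_const μ _ 1).deriv, hc0, hc1] at hlower
  have hrel : (m : ℂ) * cexp (I * θ) + I * μ * cexp (I * γ) = lam * cexp (I * γ) := by
    apply mul_right_cancel₀ (mul_ne_zero (Complex.exp_ne_zero (μ * (1 : ℝ))) hc)
    linear_combination hlower
  have hsin := Real.sin_neg_of_pi_lt_of_lt_two_pi (x := θ - γ) (by linarith [hθ.1])
    (by linarith [hθ.2])
  nlinarith [re_eq_neg_mul_sin_of_dispersion hrel]

/-- For `m > 0`, `θ ∈ (π+γ, 2π+γ)` and `λ ∈ (-m, m)`, there is no nonzero decaying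
exponential solution `ψ(z) = e^{μz} v` (with `Re μ < 0`) of the half-line Dirac
eigenvalue equation satisfying the boundary condition `v ∝ (1, e^{iγ})`. -/
theorem no_edge_state (m γ θ lam : ℝ) (hm : 0 < m)
    (hθ : θ ∈ Set.Ioo (Real.pi + γ) (2 * Real.pi + γ))
    (hlam : lam ∈ Set.Ioo (-m) m)
    (v : Fin 2 → ℂ) (μ : ℂ) (hμ : μ.re < 0)
    (heig : ∀ z : ℝ, 0 < z →
      (-Complex.I * deriv (fun t : ℝ => Complex.exp (μ * t) * v 0) z
          + (m : ℂ) * Complex.exp (-Complex.I * θ) * (Complex.exp (μ * z) * v 1)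
        = (lam : ℂ) * (Complex.exp (μ * z) * v 0)) ∧
      ((m : ℂ) * Complex.exp (Complex.I * θ) * (Complex.exp (μ * z) * v 0)
          + Complex.I * deriv (fun t : ℝ => Complex.exp (μ * t) * v 1) z
        = (lam : ℂ) * (Complex.exp (μ * z) * v 1)))
    (hbc : ∃ c : ℂ, v 0 = c * 1 ∧ v 1 = c * Complex.exp (Complex.I * γ)) :
    v = 0 :=
  no_edge_state_general m γ θ lam hm hθ v μ hμ heig hbc
end
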